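/- arXiv:1704.01901 — 5 statements merged into one kernel-verified Lean document; each statement's English description precedes it below -/
import Mathlib

section
/- Let θ(q,z) = ∑_{j=0}^∞ q^{j(j+1)/2} z^j be the partial theta function. For every complex q with 0 < |q| < 1 and every integer k ≥ 1, if |z| = |q|^{-k-1/2} then the modulus of the k-th term satisfies |q^{k(k+1)/2} z^k| = |q|^{-k²/2}, and the sum of the moduli of all other terms is strictly less than |q|^{-k²/2} · τ(|q|), where τ(x) := 2·∑_{ν=1}^∞ x^{ν²/2}. -/
open Real Complex

/-!
Completing the square, `j (j + 1) / 2 - j (k + 1 / 2) = ((j - k) ^ 2 - k ^ 2) / 2`, so with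
`x = ‖q‖` the `j`-th term has modulus `x ^ (-k ^ 2 / 2) * x ^ ((j - k) ^ 2 / 2)`. The terms with
`j > k` then add up to exactly `∑ x ^ ((ν + 1) ^ 2 / 2)`, and those with `j < k` to its partial
sum of `k` terms, which is strictly smaller.
-/

lemma norm_pow_triangle_mul_pow_eq {q z : ℂ} (hq : 0 < ‖q‖) {s : ℝ}
    (hz : ‖z‖ = ‖q‖ ^ (-s - 1 / 2)) (j : ℕ) :
    ‖q ^ (j * (j + 1) / 2) * z ^ j‖ = ‖q‖ ^ (-s ^ 2 / 2) * ‖q‖ ^ (((j : ℝ) - s) ^ 2 / 2) := by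
  have htri : ((j * (j + 1) / 2 : ℕ) : ℝ) = j * (j + 1) / 2 := by
    rw [Nat.cast_div (Nat.even_mul_succ_self j).two_dvd two_ne_zero]
    push_cast; ring
  rw [norm_mul, norm_pow, norm_pow, hz, ← rpow_natCast, htri, ← rpow_natCast,
    ← rpow_mul hq.le, ← rpow_add hq, ← rpow_add hq]
  ring_nf

lemma summable_rpow_succ_sq_div_two {x : ℝ} (hx0 : 0 < x) (hx1 : x < 1) :
    Summable fun ν : ℕ => x ^ (((ν : ℝ) + 1) ^ 2 / 2) := by
  refine (summable_geometric_of_lt_one (rpow_nonneg hx0.le (1 / 2))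
    (rpow_lt_one hx0.le hx1 one_half_pos)).of_nonneg_of_le
    (fun _ => (rpow_pos_of_pos hx0 _).le) fun n => ?_
  rw [← rpow_natCast (x ^ _) n, ← rpow_mul hx0.le]
  apply rpow_le_rpow_of_exponent_ge hx0 hx1.le
  nlinarith [(Nat.cast_nonneg n : (0 : ℝ) ≤ n)]

lemma tsum_ite_eq_zero_lt_two_mul_tsum {f h : ℕ → ℝ} (hf : Summable f) (hf0 : ∀ n, 0 ≤ f n)
    {k : ℕ} (hfk : 0 < f k) (h_right : ∀ n, h (n + (k + 1)) = f n)
    (h_left : ∀ n < k, h (k - 1 - n) = f n) :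
    ∑' j, (if j = k then 0 else h j) < 2 * ∑' n, f n := by
  set g : ℕ → ℝ := fun j => if j = k then 0 else h j
  have hg_right : (fun n => g (n + (k + 1))) = f := by
    funext n
    simp only [g, if_neg (by omega : n + (k + 1) ≠ k), h_right]
  have hg : Summable g := by rwa [← summable_nat_add_iff (k + 1), hg_right]
  have hg_left : ∑ i ∈ Finset.range (k + 1), g i = ∑ n ∈ Finset.range k, f n := by
    rw [Finset.sum_range_succ, show g k = 0 from if_pos rfl, add_zero, ← Finset.sum_range_reflect]
    refine Finset.sum_congr rfl fun n hn => ?_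
    rw [Finset.mem_range] at hn
    simp only [g, if_neg (by omega : k - 1 - n ≠ k), h_left n hn]
  have hf_partial : ∑ n ∈ Finset.range k, f n < ∑' n, f n :=
    calc ∑ n ∈ Finset.range k, f n < ∑ n ∈ Finset.range (k + 1), f n := by
          rw [Finset.sum_range_succ]; linarith
      _ ≤ ∑' n, f n := hf.sum_le_tsum _ fun n _ => hf0 n
  rw [← hg.sum_add_tsum_nat_add (k + 1), hg_left, hg_right]
  linarith

theorem stmt1_general (q : ℂ) (hq0 : 0 < ‖q‖) (hq1 : ‖q‖ < 1)
    (k : ℕ) (z : ℂ)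
    (hz : ‖z‖ = (‖q‖) ^ (-(k : ℝ) - 1 / 2)) :
    ‖q ^ (k * (k + 1) / 2) * z ^ k‖ = (‖q‖) ^ (-((k : ℝ) ^ 2) / 2) ∧
    (∑' j : ℕ, if j = k then 0 else ‖q ^ (j * (j + 1) / 2) * z ^ j‖)
      < (‖q‖) ^ (-((k : ℝ) ^ 2) / 2)
          * (2 * ∑' ν : ℕ, (‖q‖) ^ ((((ν : ℝ) + 1) ^ 2) / 2)) := by
  have hterm := norm_pow_triangle_mul_pow_eq hq0 hz
  refine ⟨by rw [hterm, sub_self]; norm_num, ?_⟩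
  have hfactor : (fun j : ℕ => if j = k then 0 else ‖q ^ (j * (j + 1) / 2) * z ^ j‖) =
      fun j => ‖q‖ ^ (-((k : ℝ) ^ 2) / 2) * if j = k then 0 else ‖q‖ ^ (((j : ℝ) - k) ^ 2 / 2) := by
    funext j
    split_ifs
    exacts [(mul_zero _).symm, hterm j]
  rw [hfactor, tsum_mul_left]
  refine mul_lt_mul_of_pos_left ?_ (rpow_pos_of_pos hq0 _)
  refine tsum_ite_eq_zero_lt_two_mul_tsum (summable_rpow_succ_sq_div_two hq0 hq1)
    (fun _ => (rpow_pos_of_pos hq0 _).le) (rpow_pos_of_pos hq0 _) (fun n => ?_) fun n hn => ?_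
  · push_cast; ring_nf
  · rw [Nat.sub_sub, Nat.cast_sub (by omega)]
    push_cast; ring_nf

theorem stmt1 (q : ℂ) (hq0 : 0 < ‖q‖) (hq1 : ‖q‖ < 1)
    (k : ℕ) (hk : 1 ≤ k) (z : ℂ)
    (hz : ‖z‖ = (‖q‖) ^ (-(k : ℝ) - 1 / 2)) :
    ‖q ^ (k * (k + 1) / 2) * z ^ k‖ = (‖q‖) ^ (-((k : ℝ) ^ 2) / 2) ∧
    (∑' j : ℕ, if j = k then 0 else ‖q ^ (j * (j + 1) / 2) * z ^ j‖)
      < (‖q‖) ^ (-((k : ℝ) ^ 2) / 2)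
          * (2 * ∑' ν : ℕ, (‖q‖) ^ ((((ν : ℝ) + 1) ^ 2) / 2)) :=
  stmt1_general q hq0 hq1 k z hz
end

section
/- Let c₀ ∈ (0,1) be a real number such that 2·∑_{ν=1}^∞ c₀^{ν²/2} ≤ 1. Then for every complex q with 0 < |q| ≤ c₀, every integer k ≥ 1, and every z with |z| = |q|^{-k-1/2}, the partial theta function θ(q,z) = ∑_{j=0}^∞ q^{j(j+1)/2} z^j is nonzero. -/
/-! On the circle `‖z‖ = ‖q‖ ^ (-k - 1/2)` the `j`-th term has modulus
`‖q‖ ^ (-k² / 2) * ‖q‖ ^ ((j - k)² / 2)`, so the term `j = k` dominates: the moduli of the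
others add up to less than `‖q‖ ^ (-k² / 2) * 2 * ∑ c₀ ^ ((ν + 1)² / 2) ≤ ‖q‖ ^ (-k² / 2)`. -/

open Real

theorem tsum_ne_zero_of_tsum_norm_lt_two_mul_norm {ι E : Type*} [NormedAddCommGroup E]
    [CompleteSpace E] {f : ι → E} (hf : Summable (‖f ·‖)) (k : ι)
    (hk : ∑' i, ‖f i‖ < 2 * ‖f k‖) : ∑' i, f i ≠ 0 := by
  classical
  have hrest : HasSum (Function.update f k 0) (∑' i, f i - f k) := by
    simpa [sub_eq_neg_add] using hf.of_norm.hasSum.update k 0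
  have hrest_norm : HasSum (‖Function.update f k 0 ·‖) (∑' i, ‖f i‖ - ‖f k‖) := by
    have hnorm : (‖Function.update f k 0 ·‖) = Function.update (‖f ·‖) k 0 := by
      ext i
      by_cases hi : i = k <;> simp [hi]
    simpa [hnorm, sub_eq_neg_add] using hf.hasSum.update k 0
  have hle : ‖∑' i, f i - f k‖ ≤ ∑' i, ‖f i‖ - ‖f k‖ := by
    rw [← hrest.tsum_eq, ← hrest_norm.tsum_eq]
    exact norm_tsum_le_tsum_norm hrest_norm.summable
  intro h0
  rw [h0, zero_sub, norm_neg] at hle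
  linarith

theorem summable_rpow_succ_sq_div_two_s2 {c : ℝ} (hc0 : 0 < c) (hc1 : c < 1) :
    Summable (fun n : ℕ => c ^ (((n : ℝ) + 1) ^ 2 / 2)) := by
  have hsqrt_lt : c ^ (1 / 2 : ℝ) < 1 := rpow_lt_one hc0.le hc1 (by norm_num)
  refine (summable_geometric_of_lt_one (by positivity) hsqrt_lt).of_nonneg_of_le
    (fun n => by positivity) fun n => ?_
  rw [← rpow_mul_natCast hc0.le]
  exact rpow_le_rpow_of_exponent_ge hc0 hc1.le (by nlinarith)

theorem summable_rpow_sub_sq_div_two {c : ℝ} (hc0 : 0 < c) (hc1 : c < 1) (k : ℕ) :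
    Summable (fun j : ℕ => c ^ (((j : ℝ) - k) ^ 2 / 2)) := by
  rw [← summable_nat_add_iff (k + 1)]
  refine (summable_rpow_succ_sq_div_two_s2 hc0 hc1).congr fun n => ?_
  push_cast
  ring_nf

-- The terms with `j > k` are exactly `∑ c ^ ((n + 1)² / 2)`; those with `j ≤ k` are `1` plus a
-- proper partial sum of it.
theorem tsum_rpow_sub_sq_div_two_lt {c : ℝ} (hc0 : 0 < c) (hc1 : c < 1) (k : ℕ) :
    ∑' j : ℕ, c ^ (((j : ℝ) - k) ^ 2 / 2)
      < 1 + 2 * ∑' n : ℕ, c ^ (((n : ℝ) + 1) ^ 2 / 2) := by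
  set g : ℕ → ℝ := fun n => c ^ (((n : ℝ) + 1) ^ 2 / 2)
  have hsplit := (summable_rpow_sub_sq_div_two hc0 hc1 k).sum_add_tsum_nat_add (k + 1)
  have htail : ∑' n : ℕ, c ^ ((((n + (k + 1) : ℕ) : ℝ) - k) ^ 2 / 2) = ∑' n, g n := by
    congr 1; ext n; simp only [g]; push_cast; ring_nf
  have hhead : ∑ j ∈ Finset.range (k + 1), c ^ (((j : ℝ) - k) ^ 2 / 2)
      = 1 + ∑ n ∈ Finset.range k, g n := by
    rw [← Finset.sum_range_reflect, Finset.sum_range_succ', add_comm]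
    congr 1
    · simp
    · refine Finset.sum_congr rfl fun n hn => ?_
      rw [Nat.cast_sub (by simp at hn; omega)]
      simp only [g]
      push_cast
      ring_nf
  have hpartial := (summable_rpow_succ_sq_div_two_s2 hc0 hc1).sum_add_tsum_nat_add k
  have hrest_pos : 0 < ∑' n : ℕ, g (n + k) :=
    ((summable_nat_add_iff k).mpr (summable_rpow_succ_sq_div_two_s2 hc0 hc1)).tsum_pos
      (fun n => by positivity) 0 (by positivity)
  linarith

theorem norm_pow_triangle_mul_pow {𝕜 : Type*} [NormedDivisionRing 𝕜] {q z : 𝕜} {a : ℝ}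
    (hq : 0 < ‖q‖) (hz : ‖z‖ = ‖q‖ ^ (-a - 1 / 2)) (j : ℕ) :
    ‖q ^ (j * (j + 1) / 2) * z ^ j‖ = ‖q‖ ^ (-a ^ 2 / 2) * ‖q‖ ^ (((j : ℝ) - a) ^ 2 / 2) := by
  have htriangle : ((j * (j + 1) / 2 : ℕ) : ℝ) = j * (j + 1) / 2 := by
    rw [Nat.cast_div (Nat.even_mul_succ_self j).two_dvd two_ne_zero]
    push_cast
    ring
  rw [norm_mul, norm_pow, norm_pow, hz, ← rpow_natCast, htriangle, ← rpow_mul_natCast hq.le,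
    ← rpow_add hq, ← rpow_add hq]
  ring_nf

theorem stmt2_general (c₀ : ℝ) (hc0 : 0 < c₀) (hc1 : c₀ < 1)
    (hc : 2 * (∑' ν : ℕ, c₀ ^ ((((ν : ℝ) + 1) ^ 2) / 2)) ≤ 1)
    (q : ℂ) (hq0 : 0 < ‖q‖) (hq : ‖q‖ ≤ c₀)
    (k : ℕ) (z : ℂ)
    (hz : ‖z‖ = (‖q‖) ^ (-(k : ℝ) - 1 / 2)) :
    (∑' j : ℕ, q ^ (j * (j + 1) / 2) * z ^ j) ≠ 0 := by
  have hq1 : ‖q‖ < 1 := hq.trans_lt hc1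
  have hterm := norm_pow_triangle_mul_pow hq0 hz
  have hgauss : ∑' j : ℕ, ‖q‖ ^ (((j : ℝ) - k) ^ 2 / 2) < 2 :=
    calc ∑' j : ℕ, ‖q‖ ^ (((j : ℝ) - k) ^ 2 / 2)
        ≤ ∑' j : ℕ, c₀ ^ (((j : ℝ) - k) ^ 2 / 2) :=
          (summable_rpow_sub_sq_div_two hq0 hq1 k).tsum_le_tsum
            (fun j => rpow_le_rpow hq0.le hq (by positivity))
            (summable_rpow_sub_sq_div_two hc0 hc1 k)
      _ < 1 + 2 * ∑' ν : ℕ, c₀ ^ (((ν : ℝ) + 1) ^ 2 / 2) := tsum_rpow_sub_sq_div_two_lt hc0 hc1 k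
      _ ≤ 2 := by linarith
  refine tsum_ne_zero_of_tsum_norm_lt_two_mul_norm ?_ k ?_
  · simp_rw [hterm]
    exact (summable_rpow_sub_sq_div_two hq0 hq1 k).mul_left _
  · simp_rw [hterm, tsum_mul_left, sub_self]
    simp only [zero_pow two_ne_zero, zero_div, rpow_zero, mul_one]
    rw [mul_comm 2]
    exact mul_lt_mul_of_pos_left hgauss (by positivity)

theorem stmt2 (c₀ : ℝ) (hc0 : 0 < c₀) (hc1 : c₀ < 1)
    (hc : 2 * (∑' ν : ℕ, c₀ ^ ((((ν : ℝ) + 1) ^ 2) / 2)) ≤ 1)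
    (q : ℂ) (hq0 : 0 < ‖q‖) (hq : ‖q‖ ≤ c₀)
    (k : ℕ) (hk : 1 ≤ k) (z : ℂ)
    (hz : ‖z‖ = (‖q‖) ^ (-(k : ℝ) - 1 / 2)) :
    (∑' j : ℕ, q ^ (j * (j + 1) / 2) * z ^ j) ≠ 0 :=
  stmt2_general c₀ hc0 hc1 hc q hq0 hq k z hz
end

section
/- For every real q with 0 ≤ q ≤ 1 − 1/b where b > 1, the infinite product ∏_{m=1}^∞ (1 − q^m) is at least e^{(π²/6)(1−b)}. -/
/-!
Expanding `-log (1 - q ^ m) = ∑ₙ q ^ (m * n) / n` and summing the resulting nonnegative double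
series in the other order gives `∑ₘ -log (1 - q ^ m) = ∑ₙ q ^ n / (1 - q ^ n) / n`.
Since `1 - q ^ n ≥ n q ^ (n - 1) (1 - q)`, the `n`-th term is at most `q / (1 - q) / n ^ 2`, so
the sum is at most `q / (1 - q) * π ^ 2 / 6`, and `q / (1 - q) ≤ b - 1` when `q ≤ 1 - 1 / b`.
-/

open Real

section
variable {q : ℝ}

lemma succ_mul_pow_mul_one_sub_le (hq0 : 0 ≤ q) (hq1 : q ≤ 1) (n : ℕ) :
    (n + 1) * q ^ n * (1 - q) ≤ 1 - q ^ (n + 1) := by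
  rw [← geom_sum_mul_neg]
  gcongr
  calc (n + 1) * q ^ n = ∑ _i ∈ Finset.range (n + 1), q ^ n := by simp
    _ ≤ ∑ i ∈ Finset.range (n + 1), q ^ i :=
      Finset.sum_le_sum fun i hi ↦
        pow_le_pow_of_le_one hq0 hq1 (Nat.lt_succ_iff.mp (Finset.mem_range.mp hi))

lemma one_sub_pow_succ_pos (hq0 : 0 ≤ q) (hq1 : q < 1) (n : ℕ) : 0 < 1 - q ^ (n + 1) :=
  sub_pos.mpr (pow_lt_one₀ hq0 hq1 n.succ_ne_zero)

lemma pow_succ_div_one_sub_pow_succ_le (hq0 : 0 ≤ q) (hq1 : q < 1) (n : ℕ) :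
    q ^ (n + 1) / (1 - q ^ (n + 1)) ≤ q / (1 - q) / (n + 1) := by
  rw [div_div, div_le_div_iff₀ (one_sub_pow_succ_pos hq0 hq1 n) (by positivity)]
  calc q ^ (n + 1) * ((1 - q) * (n + 1)) = q * ((n + 1) * q ^ n * (1 - q)) := by ring
    _ ≤ q * (1 - q ^ (n + 1)) := by gcongr; exact succ_mul_pow_mul_one_sub_le hq0 hq1.le n

lemma pow_succ_div_one_sub_pow_succ_div_succ_nonneg (hq0 : 0 ≤ q) (hq1 : q < 1) (n : ℕ) :
    0 ≤ q ^ (n + 1) / (1 - q ^ (n + 1)) / (n + 1) :=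
  div_nonneg (div_nonneg (by positivity) (one_sub_pow_succ_pos hq0 hq1 n).le) (by positivity)

lemma pow_succ_div_one_sub_pow_succ_div_succ_le (hq0 : 0 ≤ q) (hq1 : q < 1) (n : ℕ) :
    q ^ (n + 1) / (1 - q ^ (n + 1)) / (n + 1) ≤ q / (1 - q) * (1 / ((n : ℝ) + 1) ^ 2) := by
  calc q ^ (n + 1) / (1 - q ^ (n + 1)) / (n + 1) ≤ q / (1 - q) / (n + 1) / (n + 1) :=
        div_le_div_of_nonneg_right (pow_succ_div_one_sub_pow_succ_le hq0 hq1 n) (by positivity)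
    _ = q / (1 - q) * (1 / ((n : ℝ) + 1) ^ 2) := by field_simp

lemma hasSum_one_div_succ_sq : HasSum (fun n : ℕ ↦ 1 / ((n : ℝ) + 1) ^ 2) (π ^ 2 / 6) := by
  simpa using (hasSum_nat_add_iff' 1).mpr hasSum_zeta_two

lemma summable_pow_succ_div_one_sub_pow_succ_div_succ (hq0 : 0 ≤ q) (hq1 : q < 1) :
    Summable fun n : ℕ ↦ q ^ (n + 1) / (1 - q ^ (n + 1)) / (n + 1) :=
  (hasSum_one_div_succ_sq.mul_left _).summable.of_nonneg_of_le
    (pow_succ_div_one_sub_pow_succ_div_succ_nonneg hq0 hq1)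
    (pow_succ_div_one_sub_pow_succ_div_succ_le hq0 hq1)

lemma tsum_pow_succ_div_one_sub_pow_succ_div_succ_le (hq0 : 0 ≤ q) (hq1 : q < 1) :
    ∑' n : ℕ, q ^ (n + 1) / (1 - q ^ (n + 1)) / (n + 1) ≤ q / (1 - q) * (π ^ 2 / 6) :=
  hasSum_le (pow_succ_div_one_sub_pow_succ_div_succ_le hq0 hq1)
    (summable_pow_succ_div_one_sub_pow_succ_div_succ hq0 hq1).hasSum
    (hasSum_one_div_succ_sq.mul_left _)

lemma hasSum_pow_mul_div_neg_log (hq0 : 0 ≤ q) (hq1 : q < 1) (m : ℕ) :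
    HasSum (fun n : ℕ ↦ q ^ ((m + 1) * (n + 1)) / (n + 1)) (-log (1 - q ^ (m + 1))) := by
  have hlt : |q ^ (m + 1)| < 1 := by
    rw [abs_of_nonneg (pow_nonneg hq0 _)]; exact pow_lt_one₀ hq0 hq1 m.succ_ne_zero
  simpa only [pow_mul] using hasSum_pow_div_log_of_abs_lt_one hlt

lemma hasSum_pow_mul_div_geometric (hq0 : 0 ≤ q) (hq1 : q < 1) (n : ℕ) :
    HasSum (fun m : ℕ ↦ q ^ ((m + 1) * (n + 1)) / (n + 1))
      (q ^ (n + 1) / (1 - q ^ (n + 1)) / (n + 1)) := by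
  have := (hasSum_geometric_of_lt_one (pow_nonneg hq0 (n + 1))
    (pow_lt_one₀ hq0 hq1 n.succ_ne_zero)).mul_left (q ^ (n + 1))
  refine HasSum.div_const ?_ _
  simpa [mul_comm _ (n + 1), pow_mul, ← pow_succ', div_eq_mul_inv] using this

lemma summable_pow_mul_div (hq0 : 0 ≤ q) (hq1 : q < 1) :
    Summable fun p : ℕ × ℕ ↦ q ^ ((p.1 + 1) * (p.2 + 1)) / (p.2 + 1) := by
  -- checked in the swapped order, where the inner sums are geometric
  have hnonneg : (0 : ℕ × ℕ → ℝ) ≤ fun p ↦ q ^ ((p.2 + 1) * (p.1 + 1)) / (p.1 + 1) :=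
    fun p ↦ by dsimp only [Pi.zero_apply]; positivity
  refine Summable.prod_symm <| (summable_prod_of_nonneg hnonneg).mpr
    ⟨fun n ↦ (hasSum_pow_mul_div_geometric hq0 hq1 n).summable, ?_⟩
  simpa only [fun n : ℕ ↦ (hasSum_pow_mul_div_geometric hq0 hq1 n).tsum_eq] using
    summable_pow_succ_div_one_sub_pow_succ_div_succ hq0 hq1

lemma summable_log_one_sub_pow_succ (hq0 : 0 ≤ q) (hq1 : q < 1) :
    Summable fun m : ℕ ↦ log (1 - q ^ (m + 1)) := by
  have h : Summable fun m : ℕ ↦ -log (1 - q ^ (m + 1)) :=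
    (summable_pow_mul_div hq0 hq1).prod.congr fun m ↦
      (hasSum_pow_mul_div_neg_log hq0 hq1 m).tsum_eq
  simpa using h.neg

lemma tsum_neg_log_one_sub_pow_succ (hq0 : 0 ≤ q) (hq1 : q < 1) :
    ∑' m : ℕ, -log (1 - q ^ (m + 1)) = ∑' n : ℕ, q ^ (n + 1) / (1 - q ^ (n + 1)) / (n + 1) :=
  calc ∑' m : ℕ, -log (1 - q ^ (m + 1))
      = ∑' (m : ℕ) (n : ℕ), q ^ ((m + 1) * (n + 1)) / (n + 1) :=
        tsum_congr fun m ↦ (hasSum_pow_mul_div_neg_log hq0 hq1 m).tsum_eq.symm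
    _ = ∑' (n : ℕ) (m : ℕ), q ^ ((m + 1) * (n + 1)) / (n + 1) :=
        (summable_pow_mul_div hq0 hq1).tsum_comm.symm
    _ = ∑' n : ℕ, q ^ (n + 1) / (1 - q ^ (n + 1)) / (n + 1) :=
        tsum_congr fun n ↦ (hasSum_pow_mul_div_geometric hq0 hq1 n).tsum_eq

theorem exp_neg_mul_le_tprod_one_sub_pow_succ (hq0 : 0 ≤ q) (hq1 : q < 1) :
    exp (-(q / (1 - q) * (π ^ 2 / 6))) ≤ ∏' m : ℕ, (1 - q ^ (m + 1)) := by
  rw [← rexp_tsum_eq_tprod (one_sub_pow_succ_pos hq0 hq1)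
    (summable_log_one_sub_pow_succ hq0 hq1)]
  gcongr
  have h := tsum_neg_log_one_sub_pow_succ hq0 hq1
  rw [tsum_neg] at h
  linarith [tsum_pow_succ_div_one_sub_pow_succ_div_succ_le hq0 hq1]

lemma div_one_sub_le_sub_one {b : ℝ} (hb : 0 < b) (hq : q ≤ 1 - 1 / b) :
    q / (1 - q) ≤ b - 1 := by
  have hbq : 1 ≤ b * (1 - q) :=
    calc 1 = b * (1 / b) := by field_simp
      _ ≤ b * (1 - q) := by gcongr; linarith
  rw [div_le_iff₀ (by nlinarith)]
  nlinarith

end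

theorem stmt4 (b : ℝ) (hb : 1 < b) (q : ℝ) (hq0 : 0 ≤ q) (hq : q ≤ 1 - 1 / b) :
    Real.exp ((π ^ 2 / 6) * (1 - b)) ≤ ∏' m : ℕ, (1 - q ^ (m + 1)) := by
  have hb0 : 0 < b := by linarith
  have hq1 : q < 1 := by linarith [one_div_pos.mpr hb0]
  have hratio := mul_le_mul_of_nonneg_right (div_one_sub_le_sub_one hb0 hq)
    (by positivity : 0 ≤ π ^ 2 / 6)
  calc exp ((π ^ 2 / 6) * (1 - b)) ≤ exp (-(q / (1 - q) * (π ^ 2 / 6))) := by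
        gcongr; linarith
    _ ≤ ∏' m : ℕ, (1 - q ^ (m + 1)) := exp_neg_mul_le_tprod_one_sub_pow_succ hq0 hq1
end

section
/- For every integer n ≥ 5, with α₀ := √3/(2π), one has (1 − 1/(α₀·(n−1)))^{−n−1/2} ≤ (1 − 1/(4·α₀))^{−11/2}, and the latter quantity is less than 4.69 × 10⁵. -/
/-!
Take logarithms: with `t = α₀ (n - 1)`, the `n`-th bound is `exp ((n + 1/2) · (-log (1 - 1/t)))`.
The exponent is about `13.06` at `n = 5` and at most `12` for every `n ≥ 6`: for `n ≥ 7` by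
`-log (1 - 1/t) ≤ 1/(t - 1)`, and for `n = 6`, where that estimate is too weak, by bounding
`1 - 1/t` below by a fourth power. The numerical bound at `n = 5` is checked after squaring.
-/

open Real

local notation "α₀" => √3 / (2 * π)

lemma alpha0_gt : 0.275662 < α₀ := by
  have hsqrt : (1.7320508 : ℝ) < √3 := by
    rw [Real.lt_sqrt (by norm_num)]; norm_num
  rw [lt_div_iff₀ (by positivity)]
  nlinarith [pi_lt_d6]

lemma alpha0_lt : α₀ < 0.276 := by
  have hsqrt : √3 < 1.7321 := by
    rw [Real.sqrt_lt' (by norm_num)]; norm_num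
  rw [div_lt_iff₀ (by positivity)]
  nlinarith [pi_gt_d2]

/-- The lower end `1 - 1/(α₀ (n - 1))` of the range of `|q|` attached to `n`. -/
noncomputable def qLower (x : ℝ) : ℝ := 1 - 1 / (α₀ * (x - 1))

lemma one_lt_alpha0_mul {x : ℝ} (hx : 5 ≤ x) : 1 < α₀ * (x - 1) := by
  nlinarith [alpha0_gt]

lemma one_sub_one_div_pos {t : ℝ} (ht : 1 < t) : 0 < 1 - 1 / t := by
  rw [sub_pos, div_lt_one (by linarith)]
  exact ht

lemma qLower_pos {x : ℝ} (hx : 5 ≤ x) : 0 < qLower x :=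
  one_sub_one_div_pos (one_lt_alpha0_mul hx)

lemma qLower_five : qLower 5 = 1 - 1 / (4 * α₀) := by
  norm_num [qLower, mul_comm]

lemma qLower_five_gt : 0.09309 < qLower 5 := by
  have h : 1 / (α₀ * (5 - 1)) < 0.90691 := by
    rw [div_lt_iff₀ (by linarith [alpha0_gt])]
    nlinarith [alpha0_gt]
  rw [qLower]
  linarith

lemma qLower_five_lt : qLower 5 < 0.0956 := by
  have h : 0.9044 < 1 / (α₀ * (5 - 1)) := by
    rw [lt_div_iff₀ (by linarith [alpha0_gt])]
    nlinarith [alpha0_lt]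
  rw [qLower]
  linarith

lemma qLower_six_gt : 0.2326 < qLower 6 := by
  have h : 1 / (α₀ * (6 - 1)) < 0.7674 := by
    rw [div_lt_iff₀ (by linarith [alpha0_gt])]
    nlinarith [alpha0_gt]
  rw [qLower]
  linarith

lemma log_le_of_le_pow {b c : ℝ} (k : ℕ) (hb : 0 < b) (hc : 0 < c) (h : b ≤ c ^ k) :
    log b ≤ k * (c - 1) :=
  calc log b ≤ log (c ^ k) := log_le_log hb h
    _ = k * log c := Real.log_pow c k
    _ ≤ k * (c - 1) := by gcongr; exact log_le_sub_one_of_pos hc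

lemma neg_log_one_sub_one_div_le {t : ℝ} (ht : 1 < t) : -log (1 - 1 / t) ≤ 1 / (t - 1) := by
  have hb := one_sub_one_div_pos ht
  have hinv : (1 - 1 / t)⁻¹ - 1 = 1 / (t - 1) := by
    have : t - 1 ≠ 0 := by linarith
    field_simp
    ring
  have h := log_le_sub_one_of_pos (inv_pos.2 hb)
  rw [log_inv] at h
  linarith

lemma log_qLower_five_le : log (qLower 5) ≤ -24 / 11 := by
  have hB : qLower 5 ≤ (500 / 579 : ℝ) ^ 16 := by
    linarith [qLower_five_lt, show (0.0956 : ℝ) ≤ (500 / 579) ^ 16 by norm_num]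
  have h := log_le_of_le_pow 16 (qLower_pos le_rfl) (by norm_num) hB
  norm_num at h
  linarith

lemma mul_neg_log_qLower_six_le : (6 + 1 / 2) * -log (qLower 6) ≤ 12 := by
  have hpow : (25 / 36 : ℝ) ^ 4 ≤ qLower 6 := by
    linarith [qLower_six_gt, show (25 / 36 : ℝ) ^ 4 ≤ 0.2326 by norm_num]
  have hinv : (qLower 6)⁻¹ ≤ (36 / 25 : ℝ) ^ 4 := by
    simpa only [← inv_pow, inv_div] using inv_anti₀ (by positivity) hpow
  have h := log_le_of_le_pow 4 (inv_pos.2 (qLower_pos (by norm_num))) (by norm_num) hinv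
  rw [log_inv] at h
  norm_num at h
  linarith

lemma mul_neg_log_qLower_le_of_seven_le {x : ℝ} (hx : 7 ≤ x) :
    (x + 1 / 2) * -log (qLower x) ≤ 12 := by
  have ht := one_lt_alpha0_mul (x := x) (by linarith)
  calc (x + 1 / 2) * -log (qLower x) ≤ (x + 1 / 2) * (1 / (α₀ * (x - 1) - 1)) := by
        gcongr; exact neg_log_one_sub_one_div_le ht
    _ ≤ 12 := by
        rw [mul_one_div, div_le_iff₀ (by linarith)]
        nlinarith [alpha0_gt]

lemma mul_neg_log_qLower_le {n : ℕ} (hn : 6 ≤ n) : (n + 1 / 2) * -log (qLower n) ≤ 12 := by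
  rcases hn.eq_or_lt with rfl | h7
  · exact_mod_cast mul_neg_log_qLower_six_le
  · exact mul_neg_log_qLower_le_of_seven_le (by exact_mod_cast h7)

lemma rpow_le_rpow_of_log_mul_le {b B p q : ℝ} (hb : 0 < b) (hB : 0 < B)
    (h : log b * p ≤ log B * q) : b ^ p ≤ B ^ q := by
  rw [rpow_def_of_pos hb, rpow_def_of_pos hB]
  exact exp_le_exp.2 h

lemma qLower_five_rpow_lt : qLower 5 ^ (-(11 : ℝ) / 2) < 4.69 * 10 ^ 5 := by
  have hpos := qLower_pos (x := 5) le_rfl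
  have hsq : (qLower 5 ^ (-(11 : ℝ) / 2)) ^ 2 = (qLower 5)⁻¹ ^ 11 := by
    rw [← rpow_natCast, ← rpow_mul hpos.le, inv_pow, ← rpow_natCast, ← rpow_neg hpos.le]
    norm_num
  refine lt_of_pow_lt_pow_left₀ 2 (by norm_num) ?_
  rw [hsq]
  calc (qLower 5)⁻¹ ^ 11 < (0.09309 : ℝ)⁻¹ ^ 11 := by gcongr; exact qLower_five_gt
    _ < (4.69 * 10 ^ 5) ^ 2 := by norm_num

theorem stmt11 (n : ℕ) (hn : 5 ≤ n) :
    (1 - 1 / ((Real.sqrt 3 / (2 * π)) * ((n : ℝ) - 1))) ^ (-(n : ℝ) - 1 / 2)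
      ≤ (1 - 1 / (4 * (Real.sqrt 3 / (2 * π)))) ^ (-(11 : ℝ) / 2) ∧
    (1 - 1 / (4 * (Real.sqrt 3 / (2 * π)))) ^ (-(11 : ℝ) / 2) < 4.69 * 10 ^ 5 := by
  rw [← qLower_five]
  refine ⟨?_, qLower_five_rpow_lt⟩
  change qLower n ^ _ ≤ _
  rcases hn.eq_or_lt with rfl | h6
  · norm_num
  · have hn5 : (5 : ℝ) ≤ n := by exact_mod_cast hn
    apply rpow_le_rpow_of_log_mul_le (qLower_pos hn5) (qLower_pos le_rfl)
    linear_combination mul_neg_log_qLower_le h6 + 11 / 2 * log_qLower_five_le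
end

section
/- For every complex q with 0 < |q| < 1 and every complex z with |z| ≤ 1/(2|q|), the partial theta function θ(q,z) = ∑_{j=0}^∞ q^{j(j+1)/2} z^j is nonzero. In particular θ(q,z) ≠ 0 whenever |z| ≤ 1/2. -/
open Complex

lemma aux13_exp (j : ℕ) : j * (j + 1) / 2 = j * (j - 1) / 2 + j := by
  cases j with
  | zero => rfl
  | succ n =>
    have h1 : (n+1) * (n+2) = (n+1) * n + (n+1) * 2 := by ring
    have h2 : (n+1) * (n+1+1) / 2 = ((n+1) * n + (n+1) * 2) / 2 := by
      rw [← h1]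
    rw [h2, Nat.add_mul_div_right _ _ (by norm_num : 0 < 2)]
    simp

lemma aux13 (q z : ℂ) (hq0 : 0 < ‖q‖) (hq1 : ‖q‖ < 1)
    (hz : ‖z‖ ≤ 1 / (2 * ‖q‖)) :
    (∑' j : ℕ, q ^ (j * (j + 1) / 2) * z ^ j) ≠ 0 := by
  set a := ‖q‖ with ha
  set f : ℕ → ℂ := fun j => q ^ (j * (j + 1) / 2) * z ^ j with hf
  have hb : ∀ j : ℕ, ‖f j‖ ≤ a ^ (j * (j - 1) / 2) * (1/2 : ℝ) ^ j := by
    intro j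
    rw [hf]
    simp only [norm_mul, norm_pow]
    rw [aux13_exp j, pow_add]
    rw [mul_assoc]
    gcongr
    calc a ^ j * ‖z‖ ^ j ≤ a ^ j * (1 / (2 * a)) ^ j := by
          gcongr
      _ = (a * (1 / (2 * a))) ^ j := by rw [mul_pow]
      _ = (1/2 : ℝ) ^ j := by
          congr 1
          field_simp
  have hb' : ∀ j : ℕ, ‖f j‖ ≤ (1/2 : ℝ) ^ j := by
    intro j
    refine (hb j).trans ?_
    have : a ^ (j * (j - 1) / 2) ≤ 1 := pow_le_one₀ hq0.le hq1.le
    nlinarith [pow_nonneg (by norm_num : (0:ℝ) ≤ 1/2) j]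
  have hsn : Summable (fun j => ‖f j‖) :=
    Summable.of_nonneg_of_le (fun j => (norm_nonneg _)) hb'
      (summable_geometric_of_lt_one (by norm_num) (by norm_num))
  have hs : Summable f := by
    rw [← summable_norm_iff]
    simpa using hsn
  have hsn1 : Summable (fun j => ‖f (j+1)‖) :=
    (summable_nat_add_iff 1).2 hsn
  have hb2 : ‖f 2‖ < (1/2 : ℝ) ^ 2 := by
    have := hb 2
    have h2 : (2 * (2 - 1) / 2 : ℕ) = 1 := by norm_num
    rw [h2] at this
    nlinarith
  have hlt : (∑' j : ℕ, ‖f (j+1)‖) < 1 := by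
    have h1 : (∑' j : ℕ, ‖f (j+1)‖) < ∑' j : ℕ, (1/2 : ℝ) ^ (j+1) := by
      refine Summable.tsum_lt_tsum (i := 1) (fun j => hb' (j+1)) ?_ hsn1 ?_
      · exact hb2
      · exact (summable_nat_add_iff 1).2
          (summable_geometric_of_lt_one (by norm_num) (by norm_num))
    have h2 : (∑' j : ℕ, (1/2 : ℝ) ^ (j+1)) = 1 := by
      have : (∑' j : ℕ, (1/2 : ℝ) ^ (j+1)) = ∑' j : ℕ, (1/2 : ℝ) * (1/2) ^ j := by
        congr 1; funext j; ring
      rw [this, tsum_mul_left, tsum_geometric_of_lt_one (by norm_num) (by norm_num)]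
      norm_num
    linarith
  have hsplit : (∑' j : ℕ, f j) = f 0 + ∑' j : ℕ, f (j+1) := Summable.tsum_eq_zero_add hs
  have hf0 : f 0 = 1 := by simp [hf]
  intro h0
  have ht : (∑' j : ℕ, f (j+1)) = -1 := by
    have := hsplit
    rw [hf0] at this
    rw [hf] at h0
    rw [h0] at this
    linear_combination -this
  have hnorm : ‖∑' j : ℕ, f (j+1)‖ ≤ ∑' j : ℕ, ‖f (j+1)‖ := by
    simpa using norm_tsum_le_tsum_norm (f := fun j => f (j+1))
      (by simpa using hsn1)
  rw [ht] at hnorm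
  simp at hnorm
  linarith

theorem stmt13 (q z : ℂ) (hq0 : 0 < ‖q‖) (hq1 : ‖q‖ < 1) :
    (‖z‖ ≤ 1 / (2 * ‖q‖) →
      (∑' j : ℕ, q ^ (j * (j + 1) / 2) * z ^ j) ≠ 0) ∧
    (‖z‖ ≤ 1 / 2 →
      (∑' j : ℕ, q ^ (j * (j + 1) / 2) * z ^ j) ≠ 0) := by
  constructor
  · exact aux13 q z hq0 hq1
  · intro hz
    refine aux13 q z hq0 hq1 (hz.trans ?_)
    rw [div_le_div_iff₀ (by norm_num) (by positivity)]
    nlinarith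
end
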